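/- arXiv:1203.0105 — 3 statements merged into one kernel-verified Lean document; each statement's English description precedes it below -/
import Mathlib

section
/- Let k ≥ 2, n ≥ 2k, and let X = {x_1,…,x_n} be a linearly independent subset of a vector space W over a division ring. Then the maximal inexact subsets of J_k(X) are exactly the special subsets of J_k(X). -/
/-!
A special subset `J(+i,+j) ∪ J(-i)` is exactly the part of `J_k(X)` that survives in `J_k(Y)` when
`x i` is replaced by `x i + x j`, so it is inexact. Conversely, if `Z ⊆ J_k(Y)` lies in no special
subset, then for all `i ≠ j` some member of `Z` contains `x i` but not `x j`. The members of `Z`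
through `x i` then intersect in the line `K ∙ x i`; on the `Y` side, `2k`-independence turns
intersections of spans of `k`-subsets into spans of intersections, so `K ∙ x i = K ∙ y b` for some
`b`, and this forces `J_k(Y) = J_k(X)`. Finally, `k ≥ 2` and `n ≥ 2k` leave room for `k`-subsets
telling any two special subsets apart, so special subsets are pairwise incomparable.
-/

open Submodule Set Function Module

/-- A family of vectors is `m`-independent if every `m`-element subfamily is
linearly independent. -/
def MIndep (R : Type*) {W : Type*} [DivisionRing R] [AddCommGroup W] [Module R W]
    {n : ℕ} (m : ℕ) (x : Fin n → W) : Prop :=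
  ∀ A : Finset (Fin n), A.card = m → LinearIndependent R (fun i : A => x (i : Fin n))

/-- `J_k(X)`: the set of all `k`-dimensional subspaces spanned by `k`-element subsets of
the family `x`. -/
def JkSet (R : Type*) {W : Type*} [DivisionRing R] [AddCommGroup W] [Module R W]
    {n : ℕ} (k : ℕ) (x : Fin n → W) : Set (Submodule R W) :=
  {P | ∃ A : Finset (Fin n), A.card = k ∧ P = Submodule.span R (x '' ↑A)}

/-- The special subset `J(+i,+j) ∪ J(-i)` of `J = J_k(X)`: all members of `J` which either
contain both `x i` and `x j`, or do not contain `x i`. -/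
def SpecialSubset (R : Type*) {W : Type*} [DivisionRing R] [AddCommGroup W] [Module R W]
    {n : ℕ} (k : ℕ) (x : Fin n → W) (i j : Fin n) : Set (Submodule R W) :=
  {P | P ∈ JkSet R k x ∧ ((x i ∈ P ∧ x j ∈ P) ∨ x i ∉ P)}

/-- A subset `Z` of `J = J_k(X)` is inexact if there is a `(2k)`-independent `n`-element
family `y` with `J_k(Y) ≠ J` and `Z ⊆ J_k(Y)`. -/
def InexactIn (R : Type*) {W : Type*} [DivisionRing R] [AddCommGroup W] [Module R W]
    (n k : ℕ) (J : Set (Submodule R W)) (Z : Set (Submodule R W)) : Prop :=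
  ∃ y : Fin n → W, Function.Injective y ∧ MIndep R (2 * k) y ∧
    JkSet R k y ≠ J ∧ Z ⊆ JkSet R k y

section Ring

variable {R ι W : Type*} [Ring R] [AddCommGroup W] [Module R W] {v : ι → W}

theorem LinearIndepOn.span_image_inter {s t : Set ι} (hv : LinearIndepOn R v (s ∪ t)) :
    span R (v '' (s ∩ t)) = span R (v '' s) ⊓ span R (v '' t) := by
  refine le_antisymm (le_inf (span_mono (image_mono inter_subset_left))
    (span_mono (image_mono inter_subset_right))) ?_
  rintro w ⟨hws, hwt⟩
  obtain ⟨l, hl, rfl⟩ := (Finsupp.mem_span_image_iff_linearCombination R).mp hws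
  obtain ⟨l', hl', hll'⟩ := (Finsupp.mem_span_image_iff_linearCombination R).mp hwt
  have hl'l : l' = l := sub_eq_zero.mp <| linearIndepOn_iff.mp hv (l' - l)
    (sub_mem (Finsupp.supported_mono subset_union_right hl')
      (Finsupp.supported_mono subset_union_left hl)) (by rw [map_sub, hll', sub_self])
  rw [Finsupp.mem_span_image_iff_linearCombination R]
  exact ⟨l, (Finsupp.supported_inter s t).ge ⟨hl, hl'l ▸ hl'⟩, rfl⟩

theorem Finset.inf'_span_image {α : Type*} (S : Finset α) (hS : S.Nonempty) (B : α → Set ι)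
    (hB : ∀ a ∈ S, ∀ b ∈ S, LinearIndepOn R v (B a ∪ B b)) :
    S.inf' hS (fun a => span R (v '' B a)) = span R (v '' S.inf' hS B) := by
  induction hS using Finset.Nonempty.cons_induction with
  | singleton a => rfl
  | cons a S haS hS ih =>
    obtain ⟨b, hb⟩ := hS
    have hindep : LinearIndepOn R v (B a ∪ S.inf' ⟨b, hb⟩ B) :=
      (hB a (mem_cons_self a S) b (mem_cons_of_mem hb)).mono
        (Set.union_subset_union_right _ (inf'_le B hb))
    rw [inf'_cons ⟨b, hb⟩, inf'_cons ⟨b, hb⟩,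
      ih fun a ha b hb => hB a (mem_cons_of_mem ha) b (mem_cons_of_mem hb),
      ← hindep.span_image_inter]
    rfl

theorem span_image_eq_of_span_singleton_eq {v' : ι → W} {s : Set ι}
    (h : ∀ i ∈ s, span R {v i} = span R {v' i}) : span R (v '' s) = span R (v' '' s) := by
  rw [span_eq_iSup_of_singleton_spans, span_eq_iSup_of_singleton_spans, iSup_image, iSup_image]
  exact biSup_congr h

variable [Nontrivial R]

theorem LinearIndependent.mem_span_image_iff (hv : LinearIndependent R v) {i : ι} {s : Set ι} :
    v i ∈ span R (v '' s) ↔ i ∈ s :=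
  ⟨fun h => by_contra fun hi => hv.notMem_span_image hi h,
    fun h => subset_span (mem_image_of_mem v h)⟩

theorem LinearIndependent.mem_of_add_mem_span_image (hv : LinearIndependent R v) {i j : ι}
    (hij : i ≠ j) {s : Set ι} (h : v i + v j ∈ span R (v '' s)) : i ∈ s := by
  by_contra hi
  have hj : v j ∈ span R (v '' insert j s) := subset_span (mem_image_of_mem v (mem_insert j s))
  have hsum : v i + v j ∈ span R (v '' insert j s) := span_mono (image_mono (subset_insert j s)) h
  have := hv.mem_span_image_iff.mp (by simpa using sub_mem hsum hj)
  exact this.elim hij hi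

end Ring

section Update

variable {R ι W : Type*} [Ring R] [AddCommGroup W] [Module R W] [DecidableEq ι] {v : ι → W}
  {i j : ι}

theorem LinearIndependent.update_add [Fintype ι] (hv : LinearIndependent R v) (hij : i ≠ j) :
    LinearIndependent R (Function.update v i (v i + v j)) := by
  have hupdate : Function.update v i (v i + v j) = v + Pi.single i (v j) := by
    funext a
    by_cases ha : a = i
    · subst ha; simp
    · simp [ha]
  rw [Fintype.linearIndependent_iff] at hv ⊢
  intro g hg
  have hcoef := hv (g + Pi.single j (g i)) (by
    rw [← hg, hupdate]
    simp [add_smul, smul_add, Finset.sum_add_distrib, Pi.single_apply])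
  have hgi : g i = 0 := by simpa [hij] using hcoef i
  simpa [hgi] using hcoef

theorem span_image_update_add (hij : i ≠ j) {s : Set ι} (hs : i ∈ s → j ∈ s) :
    span R (Function.update v i (v i + v j) '' s) = span R (v '' s) := by
  by_cases hi : i ∈ s
  · have hvs : ∀ a ∈ s, v a ∈ span R (v '' s) := fun a ha => subset_span (mem_image_of_mem v ha)
    refine le_antisymm (span_le.mpr ?_) (span_le.mpr ?_)
    · rintro _ ⟨a, ha, rfl⟩
      by_cases hai : a = i
      · subst hai
        simpa using add_mem (hvs a ha) (hvs j (hs ha))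
      · simpa [hai] using hvs a ha
    · rintro _ ⟨a, ha, rfl⟩
      have hus : ∀ b ∈ s,
          Function.update v i (v i + v j) b ∈ span R (Function.update v i (v i + v j) '' s) :=
        fun b hb => subset_span (mem_image_of_mem _ hb)
      by_cases hai : a = i
      · subst hai
        simpa [Ne.symm hij] using sub_mem (hus a ha) (hus j (hs ha))
      · simpa [hai] using hus a ha
  · congr 1
    exact image_congr fun a ha => update_of_ne (ne_of_mem_of_not_mem ha hi) _ _

end Update

theorem Finset.exists_card_eq_superset_disjoint {ι : Type*} [Fintype ι] [DecidableEq ι]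
    {k : ℕ} {R F : Finset ι} (hR : R.card ≤ k) (hk : k + F.card ≤ Fintype.card ι)
    (hRF : Disjoint R F) : ∃ A : Finset ι, A.card = k ∧ R ⊆ A ∧ Disjoint A F := by
  obtain ⟨A, hRA, hAF, hA⟩ := exists_subsuperset_card_eq (subset_compl_iff_disjoint_right.mpr hRF)
    hR (by rw [card_compl]; omega)
  exact ⟨A, hA, hRA, subset_compl_iff_disjoint_right.mp hAF⟩

section JkSet

variable {K W : Type*} [DivisionRing K] [AddCommGroup W] [Module K W] {n k : ℕ}
  {x y : Fin n → W} {i j : Fin n}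

theorem LinearIndependent.mIndep (hx : LinearIndependent K x) (m : ℕ) : MIndep K m x :=
  fun _ _ => hx.comp _ Subtype.val_injective

theorem MIndep.linearIndepOn {m : ℕ} (hy : MIndep K m y) (hm : m ≤ n) {s : Finset (Fin n)}
    (hs : s.card ≤ m) : LinearIndepOn K y s := by
  obtain ⟨T, hsT, -, hT⟩ := Finset.exists_subsuperset_card_eq s.subset_univ hs (by simpa using hm)
  exact LinearIndepOn.mono (hy T hT) (Finset.coe_subset.mpr hsT)

theorem jkSet_eq_of_span_singleton_eq (e : Fin n ≃ Fin n)
    (h : ∀ i, span K {x i} = span K {y (e i)}) : JkSet K k x = JkSet K k y := by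
  have hspan : ∀ A : Finset (Fin n), span K (x '' A) = span K (y '' ↑(A.map e.toEmbedding)) := by
    intro A
    rw [Finset.coe_map, Equiv.coe_toEmbedding, image_image]
    exact span_image_eq_of_span_singleton_eq fun i _ => h i
  ext P
  constructor
  · rintro ⟨A, hA, rfl⟩
    exact ⟨A.map e.toEmbedding, by simpa using hA, hspan A⟩
  · rintro ⟨B, hB, rfl⟩
    refine ⟨B.map e.symm.toEmbedding, by simpa using hB, ?_⟩
    rw [hspan, Finset.map_map]
    simp

theorem exists_span_singleton_eq_of_separating (hx : LinearIndependent K x)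
    (hy : MIndep K (2 * k) y) (hk : 0 < k) (hn : 2 * k ≤ n) {Z : Set (Submodule K W)}
    (hZx : Z ⊆ JkSet K k x) (hZy : Z ⊆ JkSet K k y) (i : Fin n)
    (hsep : ∀ j ≠ i, ∃ P ∈ Z, x i ∈ P ∧ x j ∉ P) : ∃ b, span K {x i} = span K {y b} := by
  have : ∀ j : {j // j ≠ i}, ∃ A B : Finset (Fin n), B.card = k ∧ i ∈ A ∧ j.1 ∉ A ∧
      span K (x '' A) = span K (y '' B) := by
    rintro ⟨j, hj⟩
    obtain ⟨P, hPZ, hiP, hjP⟩ := hsep j hj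
    obtain ⟨A, -, rfl⟩ := hZx hPZ
    obtain ⟨B, hB, hAB⟩ := hZy hPZ
    exact ⟨A, B, hB, hx.mem_span_image_iff.mp hiP, mt hx.mem_span_image_iff.mpr hjP, hAB⟩
  choose A B hB hiA hjA hAB using this
  have : Nontrivial (Fin n) := Fin.nontrivial_iff_two_le.mpr (by omega)
  obtain ⟨j₀, hj₀⟩ := exists_ne i
  have hS : (Finset.univ : Finset {j // j ≠ i}).Nonempty := ⟨⟨j₀, hj₀⟩, Finset.mem_univ _⟩
  have hA : Finset.univ.inf' hS (fun j => (A j : Set (Fin n))) = {i} := by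
    refine subset_antisymm (fun a ha => ?_) (Finset.le_inf' hS _ fun j _ => by simpa using hiA j)
    by_contra hai
    exact hjA ⟨a, hai⟩ (Finset.inf'_le (fun j => (A j : Set (Fin n))) (Finset.mem_univ _) ha)
  have hspan : span K (y '' Finset.univ.inf' hS (fun j => (B j : Set (Fin n)))) = span K {x i} := by
    rw [← Finset.inf'_span_image _ _ _ fun a _ b _ => ?_, ← image_singleton, ← hA,
      ← Finset.inf'_span_image _ _ _ fun a _ b _ => hx.linearIndepOn _]
    · exact Finset.inf'_congr hS rfl fun j _ => (hAB j).symm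
    · rw [← Finset.coe_union]
      exact hy.linearIndepOn hn ((Finset.card_union_le _ _).trans (by rw [hB, hB]; omega))
  obtain ⟨b, hb⟩ : (Finset.univ.inf' hS (fun j => (B j : Set (Fin n)))).Nonempty := by
    by_contra hempty
    rw [not_nonempty_iff_eq_empty.mp hempty, image_empty, span_empty, eq_comm,
      span_singleton_eq_bot] at hspan
    exact hx.ne_zero i hspan
  obtain ⟨c, hc⟩ := mem_span_singleton.mp (hspan ▸ subset_span (mem_image_of_mem y hb))
  have hyb : y b ≠ 0 := (hy.linearIndepOn hn (s := {b}) (by simp; omega)).ne_zero (by simp)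
  have hc0 : c ≠ 0 := by
    rintro rfl
    exact hyb (by simp [← hc])
  exact ⟨b, by rw [← hc, span_singleton_smul_eq hc0.isUnit]⟩

theorem jkSet_eq_of_separating (hx : LinearIndependent K x) (hy : MIndep K (2 * k) y)
    (hk : 0 < k) (hn : 2 * k ≤ n) {Z : Set (Submodule K W)} (hZx : Z ⊆ JkSet K k x)
    (hZy : Z ⊆ JkSet K k y) (hsep : ∀ i j, i ≠ j → ∃ P ∈ Z, x i ∈ P ∧ x j ∉ P) :
    JkSet K k x = JkSet K k y := by
  choose σ hσ using fun i =>
    exists_span_singleton_eq_of_separating hx hy hk hn hZx hZy i fun j hj => hsep i j hj.symm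
  have hσ_inj : Injective σ := by
    intro i i' hii'
    by_contra hne
    have : x i ∈ span K (x '' {i'}) := by
      rw [image_singleton, hσ i', ← hii', ← hσ i]
      exact mem_span_singleton_self _
    exact hne (mem_singleton_iff.mp (hx.mem_span_image_iff.mp this))
  exact jkSet_eq_of_span_singleton_eq (Equiv.ofBijective σ hσ_inj.bijective_of_finite) hσ

theorem span_image_mem_specialSubset_iff (hx : LinearIndependent K x) {A : Finset (Fin n)}
    (hA : A.card = k) : span K (x '' A) ∈ SpecialSubset K k x i j ↔ (i ∈ A → j ∈ A) := by
  simp only [SpecialSubset, mem_ofPred_eq, hx.mem_span_image_iff, Finset.mem_coe]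
  exact ⟨fun h => by tauto, fun h => ⟨⟨A, hA, rfl⟩, by tauto⟩⟩

theorem inexactIn_specialSubset (hk : 0 < k) (hn : k < n) (hx : LinearIndependent K x)
    (hij : i ≠ j) : InexactIn K n k (JkSet K k x) (SpecialSubset K k x i j) := by
  set y := Function.update x i (x i + x j)
  have hy := hx.update_add hij
  refine ⟨y, hy.injective, hy.mIndep _, fun hJ => ?_, ?_⟩
  · obtain ⟨B, hB, hiB, hjB⟩ :=
      Finset.exists_card_eq_superset_disjoint (k := k) (R := {i}) (F := {j})
        (by rw [Finset.card_singleton]; exact hk) (by simpa using hn) (by simpa using hij)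
    obtain ⟨C, hC, hBC'⟩ : span K (y '' B) ∈ JkSet K k x := by
      rw [← hJ]
      exact ⟨B, hB, rfl⟩
    have hyC : ∀ a ∈ B, y a ∈ span K (x '' C) := fun a ha =>
      hBC' ▸ subset_span (mem_image_of_mem y ha)
    -- `y i = x i + x j` forces `i` and `j` into `C`, so `C ⊇ insert j B` has `k + 1` elements.
    have hBC : insert j B ⊆ C := by
      have hiC : x i + x j ∈ span K (x '' C) := by simpa [y] using hyC i (by simpa using hiB)
      intro a ha
      rcases Finset.mem_insert.mp ha with rfl | haB
      · exact hx.mem_of_add_mem_span_image hij.symm (by rwa [add_comm])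
      · by_cases hai : a = i
        · exact hai ▸ hx.mem_of_add_mem_span_image hij hiC
        · exact hx.mem_span_image_iff.mp (by simpa [y, hai] using hyC a haB)
    have := Finset.card_le_card hBC
    rw [Finset.card_insert_of_notMem (by simpa using hjB), hB, hC] at this
    omega
  · rintro P ⟨⟨A, hA, rfl⟩, hP⟩
    have hA' := (span_image_mem_specialSubset_iff hx hA).mp ⟨⟨A, hA, rfl⟩, hP⟩
    exact ⟨A, hA, (span_image_update_add hij hA').symm⟩

theorem eq_of_specialSubset_subset (hk : 2 ≤ k) (hn : k + 2 ≤ n) (hx : LinearIndependent K x)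
    {i' j' : Fin n} (hij' : i' ≠ j')
    (h : SpecialSubset K k x i j ⊆ SpecialSubset K k x i' j') : i = i' ∧ j = j' := by
  have hmem {A : Finset (Fin n)} (hA : A.card = k) (hA' : i ∈ A → j ∈ A) : i' ∈ A → j' ∈ A :=
    (span_image_mem_specialSubset_iff hx hA).mp
      (h ((span_image_mem_specialSubset_iff hx hA).mpr hA'))
  have hpair (a b : Fin n) : k + ({a, b} : Finset (Fin n)).card ≤ Fintype.card (Fin n) := by
    have := Finset.card_le_two (a := a) (b := b)
    simp only [Fintype.card_fin]
    omega
  have hii' : i = i' := by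
    by_contra hne
    obtain ⟨A, hA, hi'A, hA'⟩ := Finset.exists_card_eq_superset_disjoint (R := {i'})
      (by simp; omega) (hpair i j') (by simp [Ne.symm hne, hij'])
    simp only [Finset.disjoint_insert_right, Finset.disjoint_singleton_right] at hA'
    exact hA'.2 (hmem hA (fun hiA => (hA'.1 hiA).elim) (by simpa using hi'A))
  subst hii'
  refine ⟨rfl, ?_⟩
  by_contra hne
  obtain ⟨A, hA, hijA, hA'⟩ := Finset.exists_card_eq_superset_disjoint (R := {i, j}) (F := {j'})
    ((Finset.card_le_two).trans hk) (by simp; omega) (by simp [hij'.symm, Ne.symm hne])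
  simp only [Finset.insert_subset_iff, Finset.singleton_subset_iff] at hijA
  exact Finset.disjoint_singleton_right.mp hA' (hmem hA (fun _ => hijA.2) hijA.1)

theorem exists_specialSubset_of_inexactIn (hk : 0 < k) (hn : 2 * k ≤ n)
    (hx : LinearIndependent K x) {Z : Set (Submodule K W)} (hZ : Z ⊆ JkSet K k x)
    (h : InexactIn K n k (JkSet K k x) Z) : ∃ i j, i ≠ j ∧ Z ⊆ SpecialSubset K k x i j := by
  obtain ⟨y, -, hy, hne, hZy⟩ := h
  by_contra hno
  push Not at hno
  refine hne (jkSet_eq_of_separating hx hy hk hn hZ hZy fun i j hij => ?_).symm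
  obtain ⟨P, hPZ, hP⟩ := not_subset.mp (hno i j hij)
  simp only [SpecialSubset, mem_ofPred_eq, hZ hPZ, true_and] at hP
  exact ⟨P, hPZ, by tauto⟩

end JkSet

/-- For a linearly independent family `x` of `n` vectors, the maximal
inexact subsets of `J_k(X)` are exactly the special subsets of `J_k(X)`. -/
theorem maximal_inexact_iff_special
    {K W : Type*} [DivisionRing K] [AddCommGroup W] [Module K W]
    (n k : ℕ) (hk : 2 ≤ k) (hn : 2 * k ≤ n)
    (x : Fin n → W) (hx : LinearIndependent K x) :
    ∀ Z ⊆ JkSet K k x,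
      ((InexactIn K n k (JkSet K k x) Z ∧
          ∀ Z' ⊆ JkSet K k x, InexactIn K n k (JkSet K k x) Z' → Z ⊆ Z' → Z' = Z) ↔
        ∃ i j : Fin n, i ≠ j ∧ Z = SpecialSubset K k x i j) := by
  have hS_inexact {i j : Fin n} (hij : i ≠ j) :
      InexactIn K n k (JkSet K k x) (SpecialSubset K k x i j) :=
    inexactIn_specialSubset (by omega) (by omega) hx hij
  intro Z hZ
  constructor
  · rintro ⟨hinexact, hmax⟩
    obtain ⟨i, j, hij, hZS⟩ := exists_specialSubset_of_inexactIn (by omega) hn hx hZ hinexact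
    exact ⟨i, j, hij, (hmax _ (fun _ hP => hP.1) (hS_inexact hij) hZS).symm⟩
  · rintro ⟨i, j, hij, rfl⟩
    refine ⟨hS_inexact hij, fun Z' hZ' hinexact hSZ' => ?_⟩
    obtain ⟨i', j', hij', hZ'S⟩ := exists_specialSubset_of_inexactIn (by omega) hn hx hZ' hinexact
    obtain ⟨rfl, rfl⟩ := eq_of_specialSubset_subset hk (by omega) hx hij' (hSZ'.trans hZ'S)
    exact hZ'S.antisymm hSZ'
end

section
/- Let k ≥ 2, n ≥ 2k, and let X = {x_1,…,x_n} be a (2k)-independent subset of a vector space W over a division ring with dim W ≥ 2k. For P, Q ∈ J_k(X) and 0 ≤ m ≤ k, the following are equivalent: (i) dim(P ∩ Q) = k − m (equivalently, the distance between P and Q in the Grassmann graph is m); (ii) the number of ordered pairs (i,j) with i ≠ j such that x_i ∈ P ∩ Q and x_j ∉ P + Q equals (k−m)(n−k−m). Equivalently, dim(P ∩ Q) = k − m if and only if exactly (k−m)(n−k−m) complement subsets of J_k(X) contain both P and Q. -/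
open Submodule Set Function Module

/-!
Write `P = ⟨x_A⟩` and `Q = ⟨x_B⟩` with `|A| = |B| = k`. By `2k`-independence the vectors indexed
by `A ∪ B` are independent, and `x_j ∈ ⟨x_S⟩ ↔ j ∈ S` whenever `|S| < 2k`. Hence
`dim (P ∩ Q) = |A ∩ B| =: c`, and the counted pairs are exactly `(A ∩ B) × (A ∪ B)ᶜ`, so there are
`c (n - 2k + c)` of them. As `c ↦ c (n - 2k + c)` is strictly increasing and takes the value
`(k - m)(n - k - m)` at `c = k - m`, the two conditions are equivalent.
-/

theorem Nat.strictMono_mul_add_self (d : ℕ) : StrictMono fun c : ℕ => c * (d + c) :=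
  fun _ _ h => Nat.mul_lt_mul'' h (by omega)

namespace MIndep

variable {K W : Type*} [DivisionRing K] [AddCommGroup W] [Module K W] {n m : ℕ} {x : Fin n → W}

theorem linearIndepOn_s5 (hx : MIndep K m x) (hmn : m ≤ n) {S : Finset (Fin n)} (hS : S.card ≤ m) :
    LinearIndepOn K x (S : Set (Fin n)) := by
  obtain ⟨T, hST, hT⟩ := Finset.exists_superset_card_eq hS (by simpa using hmn)
  exact LinearIndepOn.mono (hx T hT) (Finset.coe_subset.mpr hST)

theorem mem_span_image_iff (hx : MIndep K m x) (hmn : m ≤ n) {S : Finset (Fin n)}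
    (hS : S.card < m) (j : Fin n) : x j ∈ span K (x '' S) ↔ j ∈ S := by
  have hins : LinearIndepOn K x (insert j (S : Set (Fin n))) := by
    rw [← Finset.coe_insert]
    exact hx.linearIndepOn_s5 hmn ((Finset.card_insert_le j S).trans hS)
  rw [(hx.linearIndepOn_s5 hmn hS.le).mem_span_iff, Finset.mem_coe]
  exact ⟨fun h => h hins, fun h _ => h⟩

theorem finrank_span_image (hx : MIndep K m x) (hmn : m ≤ n) {S : Finset (Fin n)}
    (hS : S.card ≤ m) : finrank K (span K (x '' S)) = S.card := by
  rw [Set.image_eq_range, finrank_span_eq_card (hx.linearIndepOn_s5 hmn hS)]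
  simp

theorem finrank_span_image_inf (hx : MIndep K m x) (hmn : m ≤ n) {A B : Finset (Fin n)}
    (hAB : (A ∪ B).card ≤ m) :
    finrank K ↥(span K (x '' A) ⊓ span K (x '' B)) = (A ∩ B).card := by
  have hA : A.card ≤ m := (Finset.card_le_card Finset.subset_union_left).trans hAB
  have hB : B.card ≤ m := (Finset.card_le_card Finset.subset_union_right).trans hAB
  have : FiniteDimensional K (span K (x '' A)) := .span_of_finite K (Set.toFinite _)
  have : FiniteDimensional K (span K (x '' B)) := .span_of_finite K (Set.toFinite _)
  have hdim := Submodule.finrank_sup_add_finrank_inf_eq (span K (x '' A)) (span K (x '' B))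
  rw [← Submodule.span_union, ← Set.image_union, ← Finset.coe_union,
    hx.finrank_span_image hmn hAB, hx.finrank_span_image hmn hA,
    hx.finrank_span_image hmn hB, ← Finset.card_union_add_card_inter A B] at hdim
  omega

theorem pairs_inf_notMem_sup_eq (hx : MIndep K m x) (hmn : m ≤ n) {A B : Finset (Fin n)}
    (hA : A.card < m) (hB : B.card < m) (hAB : A.card + B.card ≤ m) :
    {p : Fin n × Fin n | p.1 ≠ p.2 ∧ x p.1 ∈ span K (x '' A) ⊓ span K (x '' B) ∧
        x p.2 ∉ span K (x '' A) ⊔ span K (x '' B)} = ↑((A ∩ B) ×ˢ (A ∪ B)ᶜ) := by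
  ext ⟨i, j⟩
  rw [← Submodule.span_union, ← Set.image_union, ← Finset.coe_union]
  simp only [Set.mem_ofPred_eq, Submodule.mem_inf, hx.mem_span_image_iff hmn hA,
    hx.mem_span_image_iff hmn hB, Finset.coe_product, Set.mem_prod, Finset.mem_coe,
    Finset.mem_inter, Finset.mem_compl]
  constructor
  · rintro ⟨-, hi, hj⟩
    exact ⟨hi, fun hjU => hj (subset_span ⟨j, hjU, rfl⟩)⟩
  · rintro ⟨hi, hj⟩
    -- `i ∈ A ∩ B` leaves room in the `m`-independent family for `x j` next to `x '' (A ∪ B)`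
    have hU : (A ∪ B).card < m := by
      have := Finset.card_union_add_card_inter A B
      have := Finset.card_pos.mpr ⟨i, Finset.mem_inter.mpr hi⟩
      omega
    refine ⟨?_, hi, by rwa [hx.mem_span_image_iff hmn hU]⟩
    rintro rfl
    exact hj (Finset.mem_union_left _ hi.1)

end MIndep

theorem dist_iff_complement_count_general
    {K W : Type*} [DivisionRing K] [AddCommGroup W] [Module K W]
    (n k : ℕ) (hk : 2 ≤ k) (hn : 2 * k ≤ n)
    (x : Fin n → W) (hx : MIndep K (2 * k) x)
    (P Q : Submodule K W) (hP : P ∈ JkSet K k x) (hQ : Q ∈ JkSet K k x)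
    (m : ℕ) (hm : m ≤ k) :
    Module.finrank K ↥(P ⊓ Q) = k - m ↔
      {p : Fin n × Fin n | p.1 ≠ p.2 ∧ x p.1 ∈ P ⊓ Q ∧ x p.2 ∉ P ⊔ Q}.ncard =
        (k - m) * (n - k - m) := by
  obtain ⟨A, hA, rfl⟩ := hP
  obtain ⟨B, hB, rfl⟩ := hQ
  have hUI := Finset.card_union_add_card_inter A B
  rw [hx.finrank_span_image_inf (by omega) (by omega),
    hx.pairs_inf_notMem_sup_eq (by omega) (by omega) (by omega) (by omega),
    Set.ncard_coe_finset, Finset.card_product, Finset.card_compl, Fintype.card_fin,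
    show n - (A ∪ B).card = n - 2 * k + (A ∩ B).card by omega,
    show n - k - m = n - 2 * k + (k - m) by omega]
  exact (Nat.strictMono_mul_add_self _).injective.eq_iff.symm

/-- For `P, Q ∈ J_k(X)` and `0 ≤ m ≤ k`: `dim (P ∩ Q) = k - m` (i.e. the
Grassmann distance between `P` and `Q` is `m`) if and only if the number of ordered pairs
`(i,j)` with `i ≠ j`, `x i ∈ P ∩ Q` and `x j ∉ P + Q` (equivalently, the number of
complement subsets `J(+i,-j)` containing both `P` and `Q`) equals `(k-m)(n-k-m)`. -/
theorem dist_iff_complement_count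
    {K W : Type*} [DivisionRing K] [AddCommGroup W] [Module K W]
    (n k : ℕ) (hk : 2 ≤ k) (hn : 2 * k ≤ n)
    (hW : ((2 * k : ℕ) : Cardinal) ≤ Module.rank K W)
    (x : Fin n → W) (hxinj : Function.Injective x) (hx : MIndep K (2 * k) x)
    (P Q : Submodule K W) (hP : P ∈ JkSet K k x) (hQ : Q ∈ JkSet K k x)
    (m : ℕ) (hm : m ≤ k) :
    Module.finrank K ↥(P ⊓ Q) = k - m ↔
      {p : Fin n × Fin n | p.1 ≠ p.2 ∧ x p.1 ∈ P ⊓ Q ∧ x p.2 ∉ P ⊔ Q}.ncard =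
        (k - m) * (n - k - m) :=
  dist_iff_complement_count_general n k hk hn x hx P Q hP hQ m hm
end

section
/- Let k ≥ 2 and n > 2k. Let W be a 2k-dimensional left vector space over a division ring, X = {x_1,…,x_n} a (2k)-independent subset of W, and Y = {y*_1,…,y*_n} a (2k)-independent subset of the dual space W*; let U_i denote the annihilator of y*_i in W (a (2k−1)-dimensional subspace). Assume that every U_i is spanned by a subset of X and that every line ⟨x_i⟩ is the intersection of some of the subspaces U_j. Let Z = J_k(X) ∩ J*_k(Y). Then k·|Z| ≤ n·C(2k−1,k). -/
open Submodule Set Function Module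

/-- `J*_k(Y)`: the set of annihilators in `W` of the elements of `J_k(Y)` for a family `y`
of linear functionals; equivalently, the intersections of `k` distinct kernels `U_j`. -/
def JStarSet (K : Type*) {W : Type*} [DivisionRing K] [AddCommGroup W] [Module K W]
    {n : ℕ} (k : ℕ) (y : Fin n → (W →ₗ[K] K)) : Set (Submodule K W) :=
  {P | ∃ A : Finset (Fin n), A.card = k ∧ P = ⨅ i ∈ A, LinearMap.ker (y i)}

/-! Double counting of the incidences `P ≤ U_j` between `P ∈ Z` and the kernels `U_j`.
Each `P ∈ Z` is the intersection of `k` kernels, so it has at least `k` incidences. Each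
kernel is a hyperplane, so by `2k`-independence it contains at most `2k - 1` of the `x i`; a
member of `J_k(X)` inside it is spanned by `k` of those, so it has at most `C(2k-1, k)`
incidences. -/

open scoped Finset

section Independence

variable {R W : Type*} [DivisionRing R] [AddCommGroup W] [Module R W] {n m : ℕ} {x : Fin n → W}

theorem MIndep.ne_zero (hx : MIndep R m x) (hm : 0 < m) (hmn : m ≤ n) (i : Fin n) :
    x i ≠ 0 := by
  obtain ⟨A, hiA, hA⟩ := Finset.exists_superset_card_eq (s := {i}) (n := m)
    (by rwa [Finset.card_singleton]) (by rwa [Fintype.card_fin])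
  simpa using (hx A hA).ne_zero ⟨i, hiA (Finset.mem_singleton_self i)⟩

open Classical in
theorem MIndep.card_filter_mem_lt (hx : MIndep R m x) (U : Submodule R W) [FiniteDimensional R U]
    (hU : finrank R U < m) : #{i | x i ∈ U} < m := by
  by_contra! h
  obtain ⟨A, hAU, hA⟩ := Finset.exists_subset_card_eq h
  have hxU : ∀ i : A, x i ∈ U := fun i => (Finset.mem_filter.1 (hAU i.2)).2
  have hind : LinearIndependent R (fun i : A => (⟨x i, hxU i⟩ : U)) :=
    .of_comp U.subtype (hx A hA)
  have := hind.fintype_card_le_finrank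
  rw [Fintype.card_coe, hA] at this
  omega

open Classical in
theorem MIndep.card_filter_mem_ker_lt [FiniteDimensional R W] (hx : MIndep R m x)
    (hW : finrank R W = m) {f : W →ₗ[R] R} (hf : f ≠ 0) :
    #{i | x i ∈ LinearMap.ker f} < m :=
  hx.card_filter_mem_lt _ (hW ▸ Submodule.finrank_lt (LinearMap.ker_eq_top.not.2 hf))

end Independence

section Spans

variable {R W : Type*} [DivisionRing R] [AddCommGroup W] [Module R W] {n : ℕ}

theorem JkSet_finite (k : ℕ) (x : Fin n → W) : (JkSet R k x).Finite :=
  (Set.finite_range fun A : Finset (Fin n) => span R (x '' A)).subset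
    fun _ ⟨A, _, hP⟩ => ⟨A, hP.symm⟩

open Classical in
theorem JkSet_inter_Iic_subset (k : ℕ) (x : Fin n → W) (U : Submodule R W) :
    JkSet R k x ∩ Set.Iic U ⊆
      (fun A : Finset (Fin n) => span R (x '' A)) ''
        ((Finset.univ.filter (x · ∈ U)).powersetCard k) := by
  rintro P ⟨⟨A, hA, rfl⟩, hPU⟩
  refine ⟨A, Finset.mem_powersetCard.2 ⟨fun i hi => ?_, hA⟩, rfl⟩
  exact Finset.mem_filter.2 ⟨Finset.mem_univ i, hPU (subset_span ⟨i, hi, rfl⟩)⟩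

open Classical in
theorem ncard_JkSet_inter_Iic_le (k : ℕ) (x : Fin n → W) (U : Submodule R W) :
    (JkSet R k x ∩ Set.Iic U).ncard ≤ (#{i | x i ∈ U}).choose k := by
  calc (JkSet R k x ∩ Set.Iic U).ncard
      ≤ ((fun A : Finset (Fin n) => span R (x '' A)) ''
          ((Finset.univ.filter (x · ∈ U)).powersetCard k)).ncard :=
        Set.ncard_le_ncard (JkSet_inter_Iic_subset k x U) ((Finset.finite_toSet _).image _)
    _ ≤ _ := Set.ncard_image_le (Finset.finite_toSet _)
    _ = _ := by rw [Set.ncard_coe_finset, Finset.card_powersetCard]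

end Spans

open Classical in
theorem le_card_filter_le_ker_of_mem_JStarSet {K W : Type*} [DivisionRing K] [AddCommGroup W]
    [Module K W] {n k : ℕ} {y : Fin n → (W →ₗ[K] K)} {P : Submodule K W}
    (hP : P ∈ JStarSet K k y) : k ≤ #{j | P ≤ LinearMap.ker (y j)} := by
  obtain ⟨B, rfl, rfl⟩ := hP
  exact Finset.card_le_card fun j hj => Finset.mem_filter.2
    ⟨Finset.mem_univ j, iInf₂_le (f := fun j (_ : j ∈ B) => LinearMap.ker (y j)) j hj⟩

theorem card_inter_le_general
    {K W : Type*} [DivisionRing K] [AddCommGroup W] [Module K W]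
    (n k : ℕ) (hn : 2 * k < n)
    (hW : Module.finrank K W = 2 * k)
    (x : Fin n → W) (hx : MIndep K (2 * k) x)
    (y : Fin n → (W →ₗ[K] K))
    (hy : MIndep Kᵐᵒᵖ (2 * k) y) :
    k * (JkSet K k x ∩ JStarSet K k y).ncard ≤ n * Nat.choose (2 * k - 1) k := by
  classical
  rcases Nat.eq_zero_or_pos k with rfl | hk
  · rw [zero_mul]; exact Nat.zero_le _
  have : FiniteDimensional K W := Module.finite_of_finrank_pos (by omega)
  set Z := JkSet K k x ∩ JStarSet K k y
  have hZ : Z.Finite := (JkSet_finite k x).subset Set.inter_subset_left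
  let r (P : Submodule K W) (j : Fin n) : Prop := P ≤ LinearMap.ker (y j)
  have habove : ∀ P ∈ hZ.toFinset, k ≤ #(Finset.univ.bipartiteAbove r P) := fun P hP =>
    le_card_filter_le_ker_of_mem_JStarSet (hZ.mem_toFinset.1 hP).2
  have hbelow : ∀ j, #(hZ.toFinset.bipartiteBelow r j) ≤ (2 * k - 1).choose k := fun j => by
    have hker := hx.card_filter_mem_ker_lt hW (hy.ne_zero (by omega) hn.le j)
    rw [← Set.ncard_coe_finset]
    calc _ ≤ (JkSet K k x ∩ Set.Iic (LinearMap.ker (y j))).ncard := by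
          refine Set.ncard_le_ncard (fun P hP => ?_) ((JkSet_finite k x).inter_of_left _)
          simp only [Finset.coe_bipartiteBelow, Set.mem_ofPred_eq, Set.Finite.mem_toFinset] at hP
          exact ⟨hP.1.1, hP.2⟩
      _ ≤ _ := ncard_JkSet_inter_Iic_le k x _
      _ ≤ _ := Nat.choose_le_choose k (by omega)
  have := Finset.card_mul_le_card_mul r habove fun j _ => hbelow j
  rw [Finset.card_univ, Fintype.card_fin] at this
  rw [Set.ncard_eq_toFinset_card Z hZ, mul_comm]
  exact this

/-- Let `W` be `2k`-dimensional, `x` a `(2k)`-independent family of `n`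
vectors of `W` and `y` a `(2k)`-independent family of `n` functionals with kernels `U_i`,
such that every `U_i` is spanned by a subset of `X` and every line `⟨x i⟩` is the
intersection of some of the `U_j`. Then `k·|J_k(X) ∩ J*_k(Y)| ≤ n·C(2k-1,k)`. -/
theorem card_inter_le
    {K W : Type*} [DivisionRing K] [AddCommGroup W] [Module K W]
    [FiniteDimensional K W] (n k : ℕ) (hk : 2 ≤ k) (hn : 2 * k < n)
    (hW : Module.finrank K W = 2 * k)
    (x : Fin n → W) (hxinj : Function.Injective x) (hx : MIndep K (2 * k) x)
    (y : Fin n → (W →ₗ[K] K)) (hyinj : Function.Injective y)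
    (hy : MIndep Kᵐᵒᵖ (2 * k) y)
    (hker : ∀ i, ∃ A : Finset (Fin n),
      LinearMap.ker (y i) = Submodule.span K (x '' ↑A))
    (hline : ∀ i, ∃ T : Finset (Fin n),
      Submodule.span K {x i} = ⨅ j ∈ T, LinearMap.ker (y j)) :
    k * (JkSet K k x ∩ JStarSet K k y).ncard ≤ n * Nat.choose (2 * k - 1) k :=
  card_inter_le_general n k hn hW x hx y hy
end
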